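/- arXiv:1705.05062 — 3 statements merged into one kernel-verified Lean document; each statement's English description precedes it below -/
import Mathlib

section
/- Sequences a_1, ..., a_n over a commutative ring R with involution * are complementary with weight w if and only if Σ_{i=1}^n ψ_{a_i}(x) ψ_{a_i}*(x) = w, where ψ_a(x) = x^{1−l} φ_a(x²) for a of length l. -/
/-!
Expanding `ψ_a(x) ψ_a*(x) = Σ_{p,q} a_p σ(a_q) x^{2p-2q}`, only even powers occur and the
coefficient of `x^{-2j}` is `N_a(j)`. Since `σ` is an involution, `f ↦ f*` is an involutive ring
endomorphism, so `Σ ψ_{a_i} ψ_{a_i}*` is self-reciprocal: its coefficient of `x^{2j}` is `σ` of that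
of `x^{-2j}`. Hence the sum is the constant `w` exactly when the autocorrelations sum to `w` at
`j = 0` and to `0` at every `j ≥ 1`.
-/

noncomputable section
open LaurentPolynomial Finset

variable {R : Type*}

/-- The Hall polynomial `φ_a(x) = Σ aᵢ xⁱ` of a sequence. -/
def hallPhi [CommRing R] {l : ℕ} (a : Fin l → R) : LaurentPolynomial R :=
  ∑ i, C (a i) * T (i : ℤ)

/-- `ψ_a(x) = x^{1-l} φ_a(x²) = Σ aᵢ x^{2i+1-l}`. -/
def hallPsi [CommRing R] {l : ℕ} (a : Fin l → R) : LaurentPolynomial R :=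
  ∑ i, C (a i) * T (2 * (i : ℤ) + 1 - l)

/-- Extension of an involution `σ` on `R` to Laurent polynomials, sending `x ↦ x⁻¹`. -/
def lstar [CommRing R] (σ : R →+* R) (f : LaurentPolynomial R) : LaurentPolynomial R :=
  AddMonoidAlgebra.ofCoeff (Finsupp.equivMapDomain (Equiv.neg ℤ) (Finsupp.mapRange σ σ.map_zero f.coeff))

/-- Non-periodic autocorrelation `N_a(j) = Σ_{i=0}^{l-j-1} aᵢ σ(a_{i+j})`. -/
def autocorr [CommRing R] (σ : R → R) {l : ℕ} (a : Fin l → R) (j : ℕ) : R :=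
  ∑ i : Fin l, if h : (i : ℕ) + j < l then a i * σ (a ⟨(i : ℕ) + j, h⟩) else 0

/-- Reversed conjugated sequence `a* = (σ a_{l-1},…,σ a₀)`. -/
def revSeq (σ : R → R) {l : ℕ} (a : Fin l → R) : Fin l → R :=
  fun i => σ (a i.rev)

/-- Substitution `x ↦ x²` on Laurent polynomials. -/
def subSq [CommRing R] : LaurentPolynomial R →+* LaurentPolynomial R :=
  AddMonoidAlgebra.mapDomainRingHom R ((2 : ℤ) • AddMonoidHom.id ℤ)

/-- Laurent polynomials in two variables `x, y`. -/
abbrev Laurent2 (R : Type*) [CommRing R] := AddMonoidAlgebra R (ℤ × ℤ)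

/-- A single-variable `ψ_a(x)` viewed in the two-variable ring. -/
def psiX [CommRing R] {l : ℕ} (a : Fin l → R) : Laurent2 R :=
  ∑ i : Fin l, AddMonoidAlgebra.single ((2 * (i : ℤ) + 1 - l, (0 : ℤ)) : ℤ × ℤ) (a i)

/-- A single-variable `ψ_a(y)` viewed in the two-variable ring. -/
def psiY [CommRing R] {l : ℕ} (a : Fin l → R) : Laurent2 R :=
  ∑ i : Fin l, AddMonoidAlgebra.single (((0 : ℤ), 2 * (i : ℤ) + 1 - l) : ℤ × ℤ) (a i)

/-- `ψ_A(x,y) = Σᵢ ψ_{aᵢ}(x) y^{2i+1-m}` for a matrix `A` with rows `aᵢ`. -/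
def psiMat [CommRing R] {m n : ℕ} (A : Fin m → Fin n → R) : Laurent2 R :=
  ∑ i : Fin m, psiX (A i) * AddMonoidAlgebra.single (((0 : ℤ), 2 * (i : ℤ) + 1 - m) : ℤ × ℤ) (1 : R)

/-- Involution on two-variable Laurent polynomials: `x ↦ x⁻¹`, `y ↦ y⁻¹`, `σ` on coefficients. -/
def lstar2 [CommRing R] (σ : R →+* R) (f : Laurent2 R) : Laurent2 R :=
  AddMonoidAlgebra.ofCoeff (Finsupp.equivMapDomain (Equiv.neg (ℤ × ℤ)) (Finsupp.mapRange σ σ.map_zero f.coeff))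

/-- Outer product matrix `(f^t a)_{ij} = fᵢ aⱼ`. -/
def outer [CommRing R] {m n : ℕ} (f : Fin m → R) (a : Fin n → R) : Fin m → Fin n → R :=
  fun i j => f i * a j

/-- Concatenation of the rows of a matrix. -/
def seqMat [CommRing R] {m n : ℕ} (A : Fin m → Fin n → R) : Fin (m * n) → R :=
  fun k =>
    A ⟨(k : ℕ) / n, Nat.div_lt_of_lt_mul (Nat.mul_comm m n ▸ k.isLt)⟩
      ⟨(k : ℕ) % n, Nat.mod_lt _ (Nat.pos_of_ne_zero (by rintro rfl; exact absurd k.isLt (by simp)))⟩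

/-- The substitution `y = xⁿ`, as an additive monoid hom on exponents. -/
def specHom (n : ℕ) : (ℤ × ℤ) →+ ℤ :=
  AddMonoidHom.fst ℤ ℤ + (n : ℤ) • AddMonoidHom.snd ℤ ℤ

/-- Substituting `y = xⁿ` in a two-variable Laurent polynomial. -/
def specialize [CommRing R] (n : ℕ) : Laurent2 R →+* LaurentPolynomial R :=
  AddMonoidAlgebra.mapDomainRingHom R (specHom n)

/-- `a/0 = (a₀,0,a₁,…,0,a_l)`, interleaving zeros (length `2l+1` from length `l+1`). -/
def div0 [CommRing R] {l : ℕ} (a : Fin (l + 1) → R) : Fin (2 * l + 1) → R :=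
  fun i => if h : (i : ℕ) % 2 = 0 then a ⟨(i : ℕ) / 2, by have := i.isLt; omega⟩ else 0

/-- `0/a = (0,a₀,0,…,a_{l-1},0)` (length `2l+1` from length `l`). -/
def zdiv [CommRing R] {l : ℕ} (a : Fin l → R) : Fin (2 * l + 1) → R :=
  fun i => if h : (i : ℕ) % 2 = 1 then a ⟨(i : ℕ) / 2, by have := i.isLt; omega⟩ else 0

/-- `a/0` for arbitrary length `l`, giving length `2l-1`. -/
def interDiv0 [CommRing R] {l : ℕ} (a : Fin l → R) : Fin (2 * l - 1) → R :=
  fun i => if h : (i : ℕ) % 2 = 0 then a ⟨(i : ℕ) / 2, by have := i.isLt; omega⟩ else 0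

/-- `0/a` for arbitrary length `l`, giving length `2l+1`. -/
def interZero [CommRing R] {l : ℕ} (a : Fin l → R) : Fin (2 * l + 1) → R :=
  fun i => if h : (i : ℕ) % 2 = 1 then a ⟨(i : ℕ) / 2, by have := i.isLt; omega⟩ else 0

/-- Substitution doubling all exponents, on two-variable Laurent polynomials. -/
def subSq2 [CommRing R] : Laurent2 R →+* Laurent2 R :=
  AddMonoidAlgebra.mapDomainRingHom R ((2 : ℤ) • AddMonoidHom.id (ℤ × ℤ))

namespace LaurentPolynomial

variable [CommRing R]

lemma coeff_C_mul_T (r : R) (n m : ℤ) : (C r * T n).coeff m = if n = m then r else 0 := by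
  rw [← single_eq_C_mul_T, AddMonoidAlgebra.coeff_single, Finsupp.single_apply]

lemma coeff_finsetSum {ι : Type*} (s : Finset ι) (f : ι → LaurentPolynomial R) (n : ℤ) :
    (∑ i ∈ s, f i).coeff n = ∑ i ∈ s, (f i).coeff n := by
  rw [AddMonoidAlgebra.coeff_sum, Finset.sum_apply']

end LaurentPolynomial

lemma Fin.sum_ite_val_eq {M : Type*} [AddCommMonoid M] {l : ℕ} (m : ℕ) (f : Fin l → M) :
    (∑ q : Fin l, if (q : ℕ) = m then f q else 0) = if h : m < l then f ⟨m, h⟩ else 0 := by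
  split_ifs with h
  · calc (∑ q : Fin l, if (q : ℕ) = m then f q else 0)
          = ∑ q : Fin l, if q = ⟨m, h⟩ then f q else 0 :=
            Finset.sum_congr rfl fun q _ => if_congr (Fin.ext_iff (b := ⟨m, h⟩)).symm rfl rfl
      _ = f ⟨m, h⟩ := by simp
  · exact Finset.sum_eq_zero fun q _ => if_neg (by omega)

section Lstar

variable [CommRing R] (σ : R →+* R)

lemma coeff_lstar (f : LaurentPolynomial R) (n : ℤ) : (lstar σ f).coeff n = σ (f.coeff (-n)) :=
  rfl

def lstarRingHom : LaurentPolynomial R →+* LaurentPolynomial R :=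
  (invert : LaurentPolynomial R ≃ₐ[R] LaurentPolynomial R).toRingHom.comp
    (AddMonoidAlgebra.mapRingHom ℤ σ)

lemma coe_lstarRingHom : ⇑(lstarRingHom σ) = lstar σ := by
  ext f n
  simp [lstarRingHom, coeff_lstar]

lemma lstar_mul (f g : LaurentPolynomial R) : lstar σ (f * g) = lstar σ f * lstar σ g := by
  simp only [← coe_lstarRingHom, map_mul]

lemma lstar_sum {ι : Type*} (s : Finset ι) (f : ι → LaurentPolynomial R) :
    lstar σ (∑ i ∈ s, f i) = ∑ i ∈ s, lstar σ (f i) := by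
  simp only [← coe_lstarRingHom, map_sum]

lemma lstar_lstar (hσ : ∀ r, σ (σ r) = r) (f : LaurentPolynomial R) : lstar σ (lstar σ f) = f := by
  ext n
  simp [coeff_lstar, hσ]

lemma lstar_C_mul_T (r : R) (n : ℤ) : lstar σ (C r * T n) = C (σ r) * T (-n) := by
  ext m
  rw [coeff_lstar, coeff_C_mul_T, coeff_C_mul_T, apply_ite σ, map_zero]
  exact if_congr neg_eq_iff_eq_neg.symm rfl rfl

lemma eq_C_iff_of_lstar_eq_self {F : LaurentPolynomial R} (hF : lstar σ F = F)
    (hodd : ∀ n, Odd n → F.coeff n = 0) (w : R) :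
    F = C w ↔ F.coeff 0 = w ∧ ∀ j : ℕ, 1 ≤ j → F.coeff (-(2 * j)) = 0 := by
  constructor
  · rintro rfl
    exact ⟨by simp, fun j hj => by rw [C_apply, if_neg (by omega)]⟩
  · rintro ⟨h0, hneg⟩
    ext n
    rw [C_apply]
    obtain ⟨m, rfl⟩ | hn := Int.even_or_odd n
    · rcases lt_trichotomy m 0 with hm | rfl | hm
      · rw [if_neg (by omega), show m + m = -(2 * ((-m).toNat : ℤ)) by omega]
        exact hneg _ (by omega)
      · simpa using h0
      · rw [← hF, coeff_lstar, show -(m + m) = -(2 * (m.toNat : ℤ)) by omega,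
          hneg m.toNat (by omega), map_zero, if_neg (by omega)]
    · exact (hodd _ hn).trans (if_neg (by rintro rfl; exact Int.not_odd_zero hn)).symm

end Lstar

section HallPsi

variable [CommRing R] (σ : R →+* R) {l : ℕ} (a : Fin l → R)

lemma hallPsi_mul_lstar_hallPsi :
    hallPsi a * lstar σ (hallPsi a) =
      ∑ p : Fin l, ∑ q : Fin l, C (a p * σ (a q)) * T (2 * (p : ℤ) - 2 * (q : ℤ)) := by
  rw [hallPsi, lstar_sum, Finset.sum_mul_sum]
  refine Finset.sum_congr rfl fun p _ => Finset.sum_congr rfl fun q _ => ?_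
  rw [lstar_C_mul_T, mul_mul_mul_comm, ← T_add, ← map_mul]
  ring_nf

lemma coeff_hallPsi_mul_lstar_hallPsi (n : ℤ) :
    (hallPsi a * lstar σ (hallPsi a)).coeff n =
      ∑ p : Fin l, ∑ q : Fin l, if 2 * (p : ℤ) - 2 * (q : ℤ) = n then a p * σ (a q) else 0 := by
  simp only [hallPsi_mul_lstar_hallPsi, coeff_finsetSum, coeff_C_mul_T]

lemma coeff_hallPsi_mul_lstar_hallPsi_of_odd {n : ℤ} (hn : Odd n) :
    (hallPsi a * lstar σ (hallPsi a)).coeff n = 0 := by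
  obtain ⟨m, rfl⟩ := hn
  rw [coeff_hallPsi_mul_lstar_hallPsi]
  exact Finset.sum_eq_zero fun p _ => Finset.sum_eq_zero fun q _ => if_neg (by omega)

lemma coeff_hallPsi_mul_lstar_hallPsi_neg_two_mul (j : ℕ) :
    (hallPsi a * lstar σ (hallPsi a)).coeff (-(2 * j)) = autocorr σ a j := by
  rw [coeff_hallPsi_mul_lstar_hallPsi, autocorr]
  refine Finset.sum_congr rfl fun p _ => ?_
  rw [← Fin.sum_ite_val_eq (p + j) fun q => a p * σ (a q)]
  exact Finset.sum_congr rfl fun q _ => if_congr (by omega) rfl rfl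

end HallPsi

/-- complementarity with weight `w` iff `Σ ψ_{aᵢ} ψ_{aᵢ}* = w`. -/
theorem stmt5 {R : Type*} [CommRing R] (σ : R ≃+* R) (hσ : ∀ r, σ (σ r) = r)
    (k : ℕ) (l : Fin k → ℕ) (a : (i : Fin k) → Fin (l i) → R) (w : R) :
    ((∑ i, autocorr (fun r => σ r) (a i) 0 = w) ∧
        ∀ j : ℕ, 1 ≤ j → ∑ i, autocorr (fun r => σ r) (a i) j = 0)
      ↔ ∑ i, hallPsi (a i) * lstar (σ : R →+* R) (hallPsi (a i)) = C w := by
  set F := ∑ i, hallPsi (a i) * lstar (σ : R →+* R) (hallPsi (a i))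
  have hself : lstar σ F = F := by
    simp only [F, lstar_sum, lstar_mul, lstar_lstar (σ : R →+* R) hσ, mul_comm]
  have hodd (n : ℤ) (hn : Odd n) : F.coeff n = 0 := by
    simp only [F, coeff_finsetSum, coeff_hallPsi_mul_lstar_hallPsi_of_odd _ _ hn, sum_const_zero]
  have hcorr (j : ℕ) : F.coeff (-(2 * j)) = ∑ i, autocorr (fun r => σ r) (a i) j := by
    simp only [F, coeff_finsetSum, coeff_hallPsi_mul_lstar_hallPsi_neg_two_mul]
    rfl
  have hcorr₀ : F.coeff 0 = ∑ i, autocorr (fun r => σ r) (a i) 0 := by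
    simpa using hcorr 0
  rw [eq_C_iff_of_lstar_eq_self _ hself hodd, hcorr₀]
  simp only [hcorr]
end
end

section
/- Let R be a commutative ring with involutive automorphism *, let a, b, c, d ∈ R^n and e, f, g, h ∈ R^m. Define matrices Q = f*^t a + g^t c − e^t b* + h^t d, R' = f*^t b + g*^t d + e^t a* − h*^t c, S = g*^t a − f^t c − h^t b − e^t d*, T = g^t b − f^t d + h*^t a + e^t c*, where s* denotes the reversed conjugated sequence and s^t u is the outer product. Then (ψ_Q ψ_Q* + ψ_{R'} ψ_{R'}* + ψ_S ψ_S* + ψ_T ψ_T*)(x,y) = (ψ_a ψ_a* + ψ_b ψ_b* + ψ_c ψ_c* + ψ_d ψ_d*)(x) · (ψ_e ψ_e* + ψ_f ψ_f* + ψ_g ψ_g* + ψ_h ψ_h*)(y). -/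
noncomputable section
open LaurentPolynomial Finset

variable {R : Type*}

/-!
The maps `ψ` and `*` turn the matrix operations into ring operations in `R[x^{±1}, y^{±1}]`:
`ψ_{f^t a} = ψ_f(y) ψ_a(x)`, `ψ_{s*} = (ψ_s)*`, and `*` is an involutive ring endomorphism.
The identity is therefore an instance of a Lagrange-type identity
`N q + N r + N s + N t = (N a + N b + N c + N d) (N e + N f + N g + N h)`, `N z = z z*`, which holds
in any commutative ring with an involutive endomorphism: after distributing `*` it is a
polynomial identity.
-/

section Involution

variable [CommRing R] (σ : R →+* R)

theorem lstar2_eq_mapDomain_map (x : Laurent2 R) :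
    lstar2 σ x = AddMonoidAlgebra.mapDomainRingHom R (-AddMonoidHom.id (ℤ × ℤ))
      (AddMonoidAlgebra.mapRingHom (ℤ × ℤ) σ x) := by
  simp only [lstar2, Finsupp.equivMapDomain_eq_mapDomain]
  rfl

/-- The coercion is definitionally `lstar2 σ`. -/
def lstar2RingHom : Laurent2 R →+* Laurent2 R :=
  ((AddMonoidAlgebra.mapDomainRingHom R (-AddMonoidHom.id (ℤ × ℤ))).comp
    (AddMonoidAlgebra.mapRingHom (ℤ × ℤ) σ)).copy (lstar2 σ) (funext (lstar2_eq_mapDomain_map σ))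

theorem lstar2_single (p : ℤ × ℤ) (r : R) :
    lstar2 σ (AddMonoidAlgebra.single p r) = AddMonoidAlgebra.single (-p) (σ r) := by
  simp only [lstar2, AddMonoidAlgebra.single, Finsupp.mapRange_single,
    Finsupp.equivMapDomain_single, Equiv.neg_apply, AddMonoidAlgebra.coeff_ofCoeff]

theorem lstar2_lstar2 (hσ : ∀ r, σ (σ r) = r) (x : Laurent2 R) : lstar2 σ (lstar2 σ x) = x := by
  change (lstar2RingHom σ).comp (lstar2RingHom σ) x = x
  induction x using AddMonoidAlgebra.induction_linear with
  | zero => exact map_zero _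
  | add x y hx hy => rw [map_add, hx, hy]
  | single p r =>
    change lstar2 σ (lstar2 σ _) = _
    rw [lstar2_single, lstar2_single, neg_neg, hσ]

theorem lstar2_sum_single {l : ℕ} (v : Fin l → ℤ × ℤ) (hv : ∀ i, v i.rev = -v i) (b : Fin l → R) :
    lstar2 σ (∑ i, AddMonoidAlgebra.single (v i) (b i))
      = ∑ i, AddMonoidAlgebra.single (v i) (revSeq σ b i) := by
  change lstar2RingHom σ _ = _
  rw [map_sum]
  refine Fintype.sum_equiv Fin.revPerm _ _ fun i => ?_
  simp only [Fin.revPerm_apply, revSeq, Fin.rev_rev, hv]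
  exact lstar2_single σ _ _

theorem lstar2_psiX {l : ℕ} (b : Fin l → R) : lstar2 σ (psiX b) = psiX (revSeq σ b) :=
  lstar2_sum_single σ _ (fun i => by ext <;> simp [Fin.val_rev]; omega) b

theorem lstar2_psiY {l : ℕ} (b : Fin l → R) : lstar2 σ (psiY b) = psiY (revSeq σ b) :=
  lstar2_sum_single σ _ (fun i => by ext <;> simp [Fin.val_rev]; omega) b

end Involution

section Psi

variable [CommRing R] {m n : ℕ}

theorem psiX_add (a b : Fin n → R) : psiX (a + b) = psiX a + psiX b := by
  simp [psiX, Finset.sum_add_distrib]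

theorem psiX_sub (a b : Fin n → R) : psiX (a - b) = psiX a - psiX b := by
  simp [psiX, Finset.sum_sub_distrib]

theorem psiMat_add (A B : Fin m → Fin n → R) : psiMat (A + B) = psiMat A + psiMat B := by
  simp [psiMat, psiX_add, add_mul, Finset.sum_add_distrib]

theorem psiMat_sub (A B : Fin m → Fin n → R) : psiMat (A - B) = psiMat A - psiMat B := by
  simp [psiMat, psiX_sub, sub_mul, Finset.sum_sub_distrib]

theorem psiMat_outer (f : Fin m → R) (a : Fin n → R) : psiMat (outer f a) = psiY f * psiX a := by
  rw [psiMat, psiY, psiX, Finset.sum_mul_sum]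
  refine Finset.sum_congr rfl fun i _ => ?_
  rw [psiX, Finset.sum_mul]
  refine Finset.sum_congr rfl fun j _ => ?_
  simp only [outer, AddMonoidAlgebra.single_mul_single, Prod.mk_add_mk, zero_add, add_zero,
    mul_one, mul_comm]

end Psi

theorem lagrange_identity_of_involutive {S : Type*} [CommRing S] (τ : S →+* S)
    (hτ : ∀ x, τ (τ x) = x) (a b c d e f g h : S) :
    let q := τ f * a + g * c - e * τ b + h * d
    let r := τ f * b + τ g * d + e * τ a - τ h * c
    let s := τ g * a - f * c - h * b - e * τ d
    let t := g * b - f * d + τ h * a + e * τ c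
    q * τ q + r * τ r + s * τ s + t * τ t
      = (a * τ a + b * τ b + c * τ c + d * τ d) * (e * τ e + f * τ f + g * τ g + h * τ h) := by
  intro q r s t
  simp only [q, r, s, t, map_add, map_sub, map_mul, hτ]
  ring

/-- Lagrange identity for the matrices built from eight sequences. -/
theorem stmt9 {R : Type*} [CommRing R] (σ : R ≃+* R) (hσ : ∀ r, σ (σ r) = r)
    {m n : ℕ} (a b c d : Fin n → R) (e f g h : Fin m → R) :
    let st : R → R := fun r => σ r
    let σ' : R →+* R := (σ : R →+* R)
    let Q := outer (revSeq st f) a + outer g c - outer e (revSeq st b) + outer h d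
    let R' := outer (revSeq st f) b + outer (revSeq st g) d + outer e (revSeq st a)
                - outer (revSeq st h) c
    let S := outer (revSeq st g) a - outer f c - outer h b - outer e (revSeq st d)
    let T' := outer g b - outer f d + outer (revSeq st h) a + outer e (revSeq st c)
    psiMat Q * lstar2 σ' (psiMat Q) + psiMat R' * lstar2 σ' (psiMat R')
        + psiMat S * lstar2 σ' (psiMat S) + psiMat T' * lstar2 σ' (psiMat T')
      = (psiX a * lstar2 σ' (psiX a) + psiX b * lstar2 σ' (psiX b)
            + psiX c * lstar2 σ' (psiX c) + psiX d * lstar2 σ' (psiX d))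
        * (psiY e * lstar2 σ' (psiY e) + psiY f * lstar2 σ' (psiY f)
            + psiY g * lstar2 σ' (psiY g) + psiY h * lstar2 σ' (psiY h)) := by
  intro st σ' Q R' S T'
  have hst : st = ⇑σ' := rfl
  simp only [Q, R', S, T', psiMat_add, psiMat_sub, psiMat_outer, hst,
    ← lstar2_psiX σ', ← lstar2_psiY σ']
  exact lagrange_identity_of_involutive (lstar2RingHom σ') (lstar2_lstar2 σ' hσ)
    (psiX a) (psiX b) (psiX c) (psiX d) (psiY e) (psiY f) (psiY g) (psiY h)

end
end

section
/- Main theorem (Yang multiplication via two-variable Laurent polynomials): Let m, n be positive integers and let a, b ∈ {±1}^{n+1}, c, d ∈ {±1}^n, f, g ∈ {±1}^{m+1}, h, e ∈ {±1}^m satisfy (φ_a φ_a* + φ_b φ_b* + φ_c φ_c* + φ_d φ_d*)(x) = 2(2n+1) and (φ_e φ_e* + φ_f φ_f* + φ_g φ_g* + φ_h φ_h*)(x) = 2(2m+1) in ℤ[x,x⁻¹]. Then there exist sequences q, r, s, t ∈ {±1}^{(2m+1)(2n+1)} such that (φ_q φ_q* + φ_r φ_r* + φ_s φ_s* + φ_t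 φ_t*)(x) = 4(2m+1)(2n+1). -/
noncomputable section
open LaurentPolynomial Finset

variable {R : Type*}

/-! Centre the Hall polynomial of a length-`l` sequence as `ψ_a(x) = x^{1-l} φ_a(x²)`. Then
reversal becomes `x ↦ x⁻¹`, and `ψ_a ψ_a*` is `φ_a φ_a*` with `x` replaced by `x²`, so the
hypotheses hold for the `ψ`'s. Interleaving (`a/0 + 0/c`) turns into a sum of `ψ`'s and the
row-by-row Kronecker product into `ψ_f(x^{2n+1}) ψ_a(x)`, so the Hall polynomial of Yang's
`(2m+1) × (2n+1)` array is a monomial times `Σ ψ_{fᵢ}(x^{2n+1}) ψ_{aᵢ}(x)`. With the four arrays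
chosen as in Yang's construction, the conclusion becomes a four-square identity that holds in
every commutative ring with an involution. -/

namespace LaurentPolynomial

variable [CommSemiring R]

def expand (k : ℤ) : R[T;T⁻¹] →+* R[T;T⁻¹] :=
  AddMonoidAlgebra.mapDomainRingHom R (AddMonoidHom.mulLeft k)

lemma expand_single (k e : ℤ) (r : R) :
    expand k (AddMonoidAlgebra.single e r) = AddMonoidAlgebra.single (k * e) r :=
  AddMonoidAlgebra.mapDomain_single

@[simp] lemma expand_T (k e : ℤ) : expand k (T e : R[T;T⁻¹]) = T (k * e) :=
  expand_single k e 1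

@[simp] lemma expand_C (k : ℤ) (r : R) : expand k (C r) = C r := by
  simpa using expand_single k 0 r

lemma invert_expand (k : ℤ) (p : R[T;T⁻¹]) : invert (expand k p) = expand k (invert p) := by
  have : (invert : R[T;T⁻¹] ≃ₐ[R] R[T;T⁻¹]).toRingHom.comp (expand k)
      = (expand k).comp (invert : R[T;T⁻¹] ≃ₐ[R] R[T;T⁻¹]).toRingHom := by
    refine AddMonoidAlgebra.ringHom_ext (fun r => ?_) (fun e => ?_)
    · simp
    · change invert (expand k (T e)) = expand k (invert (T e))
      simp [mul_neg]
  exact congrArg (fun φ => φ p) this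

lemma T_mul_mul_invert (k : ℤ) (p : R[T;T⁻¹]) : T k * p * invert (T k * p) = p * invert p := by
  rw [map_mul, invert_T, mul_mul_mul_comm, ← T_add, add_neg_cancel, T_zero, one_mul]

end LaurentPolynomial

section Hall

variable [CommRing R] {l : ℕ}

lemma lstar_id_eq_invert (p : R[T;T⁻¹]) : lstar (RingHom.id R) p = invert p := by
  ext e
  simp [lstar, Finsupp.equivMapDomain_apply]

lemma hallPhi_add (a b : Fin l → R) : hallPhi (a + b) = hallPhi a + hallPhi b := by
  simp [hallPhi, add_mul, sum_add_distrib]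

lemma hallPsi_neg (a : Fin l → R) : hallPsi (-a) = -hallPsi a := by
  simp [hallPsi, sum_neg_distrib]

lemma hallPsi_revSeq (a : Fin l → R) : hallPsi (revSeq id a) = invert (hallPsi a) := by
  rw [hallPsi, hallPsi, map_sum, ← Equiv.sum_comp Fin.revPerm]
  refine sum_congr rfl fun i _ => ?_
  simp only [revSeq, Fin.revPerm_apply, Fin.rev_rev, id, map_mul, invert_C, invert_T, Fin.val_rev]
  congr 2
  omega

lemma hallPsi_eq_T_mul_expand (a : Fin l → R) :
    hallPsi a = T (1 - l) * expand 2 (hallPhi a) := by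
  simp only [hallPsi, hallPhi, map_sum, map_mul, expand_C, expand_T, mul_sum]
  refine sum_congr rfl fun i _ => ?_
  rw [mul_left_comm, ← T_add]
  ring_nf

lemma hallPsi_mul_invert (a : Fin l → R) :
    hallPsi a * invert (hallPsi a) = expand 2 (hallPhi a * invert (hallPhi a)) := by
  rw [hallPsi_eq_T_mul_expand, T_mul_mul_invert, map_mul, invert_expand]

lemma hallPhi_div0 (u : Fin (l + 1) → R) : hallPhi (div0 u) = T l * hallPsi u := by
  rw [hallPsi, mul_sum, hallPhi]
  symm
  refine Fintype.sum_of_injective (fun j => ⟨2 * j, by omega⟩) (fun i j h => ?_) _ _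
    (fun i hi => ?_) (fun j => ?_)
  · exact Fin.ext (by simpa using h)
  · have hodd : (i : ℕ) % 2 = 1 := by
      by_contra hne
      exact hi ⟨⟨(i : ℕ) / 2, by omega⟩, Fin.ext (by simp; omega)⟩
    simp [div0, hodd]
  · have hj : (⟨2 * (j : ℕ) / 2, by omega⟩ : Fin (l + 1)) = j := Fin.ext (by simp)
    simp only [div0, Nat.mul_mod_right, dif_pos, hj]
    rw [mul_left_comm, ← T_add]
    congr 2
    push_cast
    ring

lemma hallPhi_zdiv (w : Fin l → R) : hallPhi (zdiv w) = T l * hallPsi w := by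
  rw [hallPsi, mul_sum, hallPhi]
  symm
  refine Fintype.sum_of_injective (fun j => ⟨2 * j + 1, by omega⟩) (fun i j h => ?_) _ _
    (fun i hi => ?_) (fun j => ?_)
  · exact Fin.ext (by simpa using h)
  · have heven : (i : ℕ) % 2 = 0 := by
      by_contra hne
      exact hi ⟨⟨(i : ℕ) / 2, by omega⟩, Fin.ext (by simp; omega)⟩
    simp [zdiv, heven]
  · have hj : (⟨(2 * (j : ℕ) + 1) / 2, by omega⟩ : Fin l) = j := Fin.ext (by simp; omega)
    have hodd : (2 * (j : ℕ) + 1) % 2 = 1 := by omega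
    simp only [zdiv, hodd, dif_pos, hj]
    rw [mul_left_comm, ← T_add]
    congr 2
    push_cast
    ring

lemma seqMat_add {p t : ℕ} (A B : Fin p → Fin t → R) : seqMat (A + B) = seqMat A + seqMat B := rfl

lemma hallPhi_seqMat_outer {p t : ℕ} (y : Fin p → R) (x : Fin t → R) :
    hallPhi (seqMat (outer y x)) = expand t (hallPhi y) * hallPhi x := by
  simp only [hallPhi, map_sum, map_mul, expand_C, expand_T, sum_mul_sum]
  rw [← Fintype.sum_prod_type', ← Equiv.sum_comp finProdFinEquiv]
  refine sum_congr rfl fun ⟨r, c⟩ _ => ?_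
  have hdiv : ((c : ℕ) + t * r) / t = r := by
    rw [Nat.add_mul_div_left _ _ c.pos, Nat.div_eq_of_lt c.isLt, zero_add]
  have hmod : ((c : ℕ) + t * r) % t = c := by
    rw [Nat.add_mul_mod_self_left, Nat.mod_eq_of_lt c.isLt]
  simp only [seqMat, outer, finProdFinEquiv_apply_val, hdiv, hmod, Fin.eta, map_mul]
  rw [mul_mul_mul_comm, ← T_add]
  congr 2
  push_cast
  ring

end Hall

section SignSeq

variable [Ring R] {l : ℕ}

def IsSignSeq (s : Fin l → R) : Prop := ∀ i, s i = 1 ∨ s i = -1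

lemma IsSignSeq.neg {s : Fin l → R} (hs : IsSignSeq s) : IsSignSeq (-s) := fun i => by
  rcases hs i with h | h <;> simp [h]

lemma IsSignSeq.revSeq {s : Fin l → R} (hs : IsSignSeq s) : IsSignSeq (revSeq id s) :=
  fun i => hs i.rev

end SignSeq

section Yang

variable [CommRing R] {m n : ℕ}

/-- The `(2m+1) × (2n+1)` array whose entry at `(2i+ε, 2j+δ)` is `f₁ᵢa₁ⱼ`, `f₂ᵢc₁ⱼ`, `e₁ᵢa₂ⱼ`,
`e₂ᵢc₂ⱼ` for `(ε, δ) = (0,0), (0,1), (1,0), (1,1)`, read row by row. -/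
def yangSeq (f₁ : Fin (m + 1) → R) (a₁ : Fin (n + 1) → R) (f₂ : Fin (m + 1) → R) (c₁ : Fin n → R)
    (e₁ : Fin m → R) (a₂ : Fin (n + 1) → R) (e₂ : Fin m → R) (c₂ : Fin n → R) :
    Fin ((2 * m + 1) * (2 * n + 1)) → R :=
  seqMat (outer (div0 f₁) (div0 a₁) + outer (div0 f₂) (zdiv c₁)
    + outer (zdiv e₁) (div0 a₂) + outer (zdiv e₂) (zdiv c₂))

lemma isSignSeq_yangSeq {f₁ f₂ : Fin (m + 1) → R} {e₁ e₂ : Fin m → R} {a₁ a₂ : Fin (n + 1) → R}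
    {c₁ c₂ : Fin n → R} (hf₁ : IsSignSeq f₁) (ha₁ : IsSignSeq a₁) (hf₂ : IsSignSeq f₂)
    (hc₁ : IsSignSeq c₁) (he₁ : IsSignSeq e₁) (ha₂ : IsSignSeq a₂) (he₂ : IsSignSeq e₂)
    (hc₂ : IsSignSeq c₂) : IsSignSeq (yangSeq f₁ a₁ f₂ c₁ e₁ a₂ e₂ c₂) := by
  have mul_sign {x y : R} (hx : x = 1 ∨ x = -1) (hy : y = 1 ∨ y = -1) :
      x * y = 1 ∨ x * y = -1 := by
    rcases hx with rfl | rfl <;> rcases hy with rfl | rfl <;> simp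
  intro i
  simp only [yangSeq, seqMat, outer, Pi.add_apply, div0, zdiv]
  split_ifs <;> first
    | omega
    | simp only [mul_zero, zero_mul, add_zero, zero_add]
      first
        | exact mul_sign (hf₁ _) (ha₁ _) | exact mul_sign (hf₂ _) (hc₁ _)
        | exact mul_sign (he₁ _) (ha₂ _) | exact mul_sign (he₂ _) (hc₂ _)

lemma hallPhi_yangSeq (f₁ : Fin (m + 1) → R) (a₁ : Fin (n + 1) → R) (f₂ : Fin (m + 1) → R)
    (c₁ : Fin n → R) (e₁ : Fin m → R) (a₂ : Fin (n + 1) → R) (e₂ : Fin m → R) (c₂ : Fin n → R) :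
    hallPhi (yangSeq f₁ a₁ f₂ c₁ e₁ a₂ e₂ c₂) = T ((2 * n + 1) * m + n) *
      (expand (2 * n + 1) (hallPsi f₁) * hallPsi a₁ + expand (2 * n + 1) (hallPsi f₂) * hallPsi c₁
        + expand (2 * n + 1) (hallPsi e₁) * hallPsi a₂
        + expand (2 * n + 1) (hallPsi e₂) * hallPsi c₂) := by
  simp only [yangSeq, seqMat_add, hallPhi_add, hallPhi_seqMat_outer, hallPhi_div0, hallPhi_zdiv,
    map_mul, expand_T, T_add]
  push_cast
  ring

end Yang

lemma yang_norm_identity {S Φ : Type*} [CommRing S] [FunLike Φ S S] [RingHomClass Φ S S] (σ : Φ)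
    (hσ : Function.Involutive σ) (A B C D E F G H : S) :
    (-σ F * B + σ G * C + H * σ A + σ E * D) * σ (-σ F * B + σ G * C + H * σ A + σ E * D)
      + (-G * B + -F * C + -σ E * A + H * σ D) * σ (-G * B + -F * C + -σ E * A + H * σ D)
      + (-G * σ A + σ F * σ D + σ E * σ B + σ H * C)
        * σ (-G * σ A + σ F * σ D + σ E * σ B + σ H * C)
      + (-σ F * A + -G * D + -H * σ B + E * C) * σ (-σ F * A + -G * D + -H * σ B + E * C)
      = (A * σ A + B * σ B + C * σ C + D * σ D) * (E * σ E + F * σ F + G * σ G + H * σ H) := by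
  simp only [map_add, map_mul, map_neg, hσ _]
  ring

theorem stmt14_general (m n : ℕ)
    (a b : Fin (n + 1) → ℤ) (c d : Fin n → ℤ)
    (f g : Fin (m + 1) → ℤ) (h e : Fin m → ℤ)
    (ha : ∀ i, a i = 1 ∨ a i = -1) (hb : ∀ i, b i = 1 ∨ b i = -1)
    (hc : ∀ i, c i = 1 ∨ c i = -1) (hd : ∀ i, d i = 1 ∨ d i = -1)
    (hf : ∀ i, f i = 1 ∨ f i = -1) (hg : ∀ i, g i = 1 ∨ g i = -1)
    (hh : ∀ i, h i = 1 ∨ h i = -1) (he : ∀ i, e i = 1 ∨ e i = -1)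
    (habcd : hallPhi a * lstar (RingHom.id ℤ) (hallPhi a)
        + hallPhi b * lstar (RingHom.id ℤ) (hallPhi b)
        + hallPhi c * lstar (RingHom.id ℤ) (hallPhi c)
        + hallPhi d * lstar (RingHom.id ℤ) (hallPhi d)
      = C ((2 * (2 * n + 1) : ℕ) : ℤ))
    (hefgh : hallPhi e * lstar (RingHom.id ℤ) (hallPhi e)
        + hallPhi f * lstar (RingHom.id ℤ) (hallPhi f)
        + hallPhi g * lstar (RingHom.id ℤ) (hallPhi g)
        + hallPhi h * lstar (RingHom.id ℤ) (hallPhi h)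
      = C ((2 * (2 * m + 1) : ℕ) : ℤ)) :
    ∃ q r s t : Fin ((2 * m + 1) * (2 * n + 1)) → ℤ,
      (∀ i, q i = 1 ∨ q i = -1) ∧ (∀ i, r i = 1 ∨ r i = -1) ∧
      (∀ i, s i = 1 ∨ s i = -1) ∧ (∀ i, t i = 1 ∨ t i = -1) ∧
      hallPhi q * lstar (RingHom.id ℤ) (hallPhi q)
          + hallPhi r * lstar (RingHom.id ℤ) (hallPhi r)
          + hallPhi s * lstar (RingHom.id ℤ) (hallPhi s)
          + hallPhi t * lstar (RingHom.id ℤ) (hallPhi t)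
        = C ((4 * (2 * m + 1) * (2 * n + 1) : ℕ) : ℤ) := by
  have hX := congrArg (expand 2) habcd
  have hY := congrArg (expand 2) hefgh
  simp only [lstar_id_eq_invert, map_add, ← hallPsi_mul_invert, expand_C] at hX hY
  replace hY := congrArg (expand (2 * n + 1)) hY
  simp only [map_add, map_mul, ← invert_expand, expand_C] at hY
  refine ⟨yangSeq (-revSeq id f) b (revSeq id g) c h (revSeq id a) (revSeq id e) d,
    yangSeq (-g) b (-f) c (-revSeq id e) a h (revSeq id d),
    yangSeq (-g) (revSeq id a) (revSeq id f) (revSeq id d) (revSeq id e) (revSeq id b)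
      (revSeq id h) c,
    yangSeq (-revSeq id f) a (-g) d (-h) (revSeq id b) e c,
    isSignSeq_yangSeq (IsSignSeq.revSeq hf).neg hb (IsSignSeq.revSeq hg) hc hh
      (IsSignSeq.revSeq ha) (IsSignSeq.revSeq he) hd,
    isSignSeq_yangSeq (IsSignSeq.neg hg) hb (IsSignSeq.neg hf) hc (IsSignSeq.revSeq he).neg ha hh
      (IsSignSeq.revSeq hd),
    isSignSeq_yangSeq (IsSignSeq.neg hg) (IsSignSeq.revSeq ha) (IsSignSeq.revSeq hf)
      (IsSignSeq.revSeq hd) (IsSignSeq.revSeq he) (IsSignSeq.revSeq hb) (IsSignSeq.revSeq hh) hc,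
    isSignSeq_yangSeq (IsSignSeq.revSeq hf).neg ha (IsSignSeq.neg hg) hd (IsSignSeq.neg hh)
      (IsSignSeq.revSeq hb) he hc, ?_⟩
  simp only [lstar_id_eq_invert, hallPhi_yangSeq, T_mul_mul_invert, hallPsi_neg, hallPsi_revSeq,
    map_neg, ← invert_expand]
  rw [yang_norm_identity _ involutive_invert, hX, hY, ← map_mul]
  congr 1
  push_cast
  ring

/-- main theorem — Yang multiplication via Hall polynomials. -/
theorem stmt14 (m n : ℕ) (hm : 0 < m) (hn : 0 < n)
    (a b : Fin (n + 1) → ℤ) (c d : Fin n → ℤ)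
    (f g : Fin (m + 1) → ℤ) (h e : Fin m → ℤ)
    (ha : ∀ i, a i = 1 ∨ a i = -1) (hb : ∀ i, b i = 1 ∨ b i = -1)
    (hc : ∀ i, c i = 1 ∨ c i = -1) (hd : ∀ i, d i = 1 ∨ d i = -1)
    (hf : ∀ i, f i = 1 ∨ f i = -1) (hg : ∀ i, g i = 1 ∨ g i = -1)
    (hh : ∀ i, h i = 1 ∨ h i = -1) (he : ∀ i, e i = 1 ∨ e i = -1)
    (habcd : hallPhi a * lstar (RingHom.id ℤ) (hallPhi a)
        + hallPhi b * lstar (RingHom.id ℤ) (hallPhi b)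
        + hallPhi c * lstar (RingHom.id ℤ) (hallPhi c)
        + hallPhi d * lstar (RingHom.id ℤ) (hallPhi d)
      = C ((2 * (2 * n + 1) : ℕ) : ℤ))
    (hefgh : hallPhi e * lstar (RingHom.id ℤ) (hallPhi e)
        + hallPhi f * lstar (RingHom.id ℤ) (hallPhi f)
        + hallPhi g * lstar (RingHom.id ℤ) (hallPhi g)
        + hallPhi h * lstar (RingHom.id ℤ) (hallPhi h)
      = C ((2 * (2 * m + 1) : ℕ) : ℤ)) :
    ∃ q r s t : Fin ((2 * m + 1) * (2 * n + 1)) → ℤ,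
      (∀ i, q i = 1 ∨ q i = -1) ∧ (∀ i, r i = 1 ∨ r i = -1) ∧
      (∀ i, s i = 1 ∨ s i = -1) ∧ (∀ i, t i = 1 ∨ t i = -1) ∧
      hallPhi q * lstar (RingHom.id ℤ) (hallPhi q)
          + hallPhi r * lstar (RingHom.id ℤ) (hallPhi r)
          + hallPhi s * lstar (RingHom.id ℤ) (hallPhi s)
          + hallPhi t * lstar (RingHom.id ℤ) (hallPhi t)
        = C ((4 * (2 * m + 1) * (2 * n + 1) : ℕ) : ℤ) :=
  stmt14_general m n a b c d f g h e ha hb hc hd hf hg hh he habcd hefgh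
end
end
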